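/- arXiv:2510.05955 — 7 statements merged into one kernel-verified Lean document; each statement's English description precedes it below -/
import Mathlib

section
/- Any clique in the exclusion graph of feasible interactions gives a lower bound on sample size: if U is a set of feasible t-wise interactions such that for every two distinct interactions I, I' in U there is no valid configuration covering both, then any sample S with t-wise coverage satisfies |U| ≤ |S|. -/
/-- A configuration `c` covers an interaction `I` (a set of literals, each a pair
of a variable and a polarity) if every literal of `I` is true under `c`. -/
def Covers {α : Type*} (c : α → Bool) (I : Finset (α × Bool)) : Prop :=
  ∀ l ∈ I, c l.1 = l.2

/-- Any clique in the exclusion graph of feasible interactions gives a lower bound on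
sample size: if `U` is a set of feasible `t`-wise interactions over the concrete
features such that no valid configuration covers two distinct members of `U`, then
any sample `S` of valid configurations with `t`-wise coverage satisfies `|U| ≤ |S|`. -/
theorem stmt_0 {α : Type*} (valid : (α → Bool) → Prop) (conc : Set α) (t : ℕ)
    (U : Finset (Finset (α × Bool)))
    (hUt : ∀ I ∈ U, I.card = t ∧ ∀ l ∈ I, l.1 ∈ conc)
    (hUfeas : ∀ I ∈ U, ∃ c, valid c ∧ Covers c I)
    (hUexcl : ∀ I ∈ U, ∀ I' ∈ U, I ≠ I' →
      ¬∃ c, valid c ∧ Covers c I ∧ Covers c I')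
    (S : Finset (α → Bool)) (hSvalid : ∀ c ∈ S, valid c)
    (hScov : ∀ I : Finset (α × Bool), I.card = t → (∀ l ∈ I, l.1 ∈ conc) →
      (∃ c, valid c ∧ Covers c I) → ∃ c ∈ S, Covers c I) :
    U.card ≤ S.card := by
  -- Each `I ∈ U` is covered by some `c ∈ S`, and each `c ∈ S` covers at most one `I ∈ U`.
  refine Finset.card_le_card_of_forall_subsingleton (fun I c => Covers c I)
    (fun I hI => hScov I (hUt I hI).1 (hUt I hI).2 (hUfeas I hI)) ?_
  rintro c hc I ⟨hI, hcI⟩ I' ⟨hI', hcI'⟩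
  by_contra hne
  exact hUexcl I hI I' hI' hne ⟨c, hSvalid c hc, hcI, hcI'⟩
end

section
/- To certify that a destruction D ⊆ S of a sample S is doomed, it suffices to consider only interactions covered by exactly one configuration of S. Precisely: if there is a mutually exclusive set U of interactions uncovered by S \ D that assigns to each configuration in D a distinct interaction covered by it, then there is such a set U' in which every interaction is covered by exactly one configuration of S. -/
/-- To certify that a destruction `D ⊆ S` is doomed, it suffices to consider only
interactions covered by exactly one configuration of `S`: if there is a mutually
exclusive set `U` of feasible interactions, each uncovered by `S \ D`, assigning to
each configuration of `D` a distinct interaction covered by it, then there is such a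
certificate `U'` in which every interaction is covered by exactly one member of `S`. -/
theorem stmt_2 {α : Type*} [DecidableEq (α → Bool)]
    (valid : (α → Bool) → Prop)
    (S D : Finset (α → Bool)) (hDS : D ⊆ S) (hSvalid : ∀ c ∈ S, valid c)
    (U : Finset (Finset (α × Bool)))
    (hUfeas : ∀ I ∈ U, ∃ c, valid c ∧ Covers c I)
    (hUexcl : ∀ I ∈ U, ∀ I' ∈ U, I ≠ I' →
      ¬∃ c, valid c ∧ Covers c I ∧ Covers c I')
    (hUuncov : ∀ I ∈ U, ∀ c ∈ S \ D, ¬Covers c I)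
    (f : (α → Bool) → Finset (α × Bool))
    (hfU : ∀ c ∈ D, f c ∈ U) (hfcov : ∀ c ∈ D, Covers c (f c))
    (hfinj : ∀ c ∈ D, ∀ c' ∈ D, f c = f c' → c = c') :
    ∃ (U' : Finset (Finset (α × Bool))) (f' : (α → Bool) → Finset (α × Bool)),
      (∀ I ∈ U', ∃ c, valid c ∧ Covers c I) ∧
      (∀ I ∈ U', ∀ I' ∈ U', I ≠ I' →
        ¬∃ c, valid c ∧ Covers c I ∧ Covers c I') ∧
      (∀ I ∈ U', ∀ c ∈ S \ D, ¬Covers c I) ∧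
      (∀ c ∈ D, f' c ∈ U') ∧ (∀ c ∈ D, Covers c (f' c)) ∧
      (∀ c ∈ D, ∀ c' ∈ D, f' c = f' c' → c = c') ∧
      (∀ I ∈ U', ∃! c, c ∈ S ∧ Covers c I) := by
  classical
  refine ⟨D.image f, f, ?_, ?_, ?_, ?_, hfcov, hfinj, ?_⟩
  · intro I hI
    obtain ⟨c, hc, rfl⟩ := Finset.mem_image.1 hI
    exact hUfeas _ (hfU c hc)
  · intro I hI I' hI' hne
    obtain ⟨c, hc, rfl⟩ := Finset.mem_image.1 hI
    obtain ⟨c', hc', rfl⟩ := Finset.mem_image.1 hI'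
    exact hUexcl _ (hfU c hc) _ (hfU c' hc') hne
  · intro I hI
    obtain ⟨c, hc, rfl⟩ := Finset.mem_image.1 hI
    exact hUuncov _ (hfU c hc)
  · intro c hc
    exact Finset.mem_image_of_mem f hc
  · intro I hI
    obtain ⟨c, hc, rfl⟩ := Finset.mem_image.1 hI
    refine ⟨c, ⟨hDS hc, hfcov c hc⟩, ?_⟩
    rintro c' ⟨hc'S, hc'cov⟩
    by_cases hc'D : c' ∈ D
    · by_contra hne
      by_cases heq : f c' = f c
      · exact hne (hfinj c' hc'D c hc heq)
      · exact hUexcl _ (hfU c' hc'D) _ (hfU c hc) heq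
          ⟨c', hSvalid c' hc'S, hfcov c' hc'D, hc'cov⟩
    · exact absurd hc'cov (hUuncov _ (hfU c hc) c' (Finset.mem_sdiff.2 ⟨hc'S, hc'D⟩))
end

section
/- If a destruction D of a sample S is doomed (certified by a mutually exclusive set U of uncovered interactions with one distinct member per removed configuration, so |U| ≥ |D|), then any replacement set R of valid configurations such that (S \ D) ∪ R has full coverage satisfies |R| ≥ |D|; hence no improvement in sample size is possible by repairing D. -/
/-- If a destruction `D` of a sample `S` is doomed (certified by a mutually exclusive
set `U ⊆ 𝓘` of interactions uncovered by `S \ D`, with one distinct member per removed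
configuration), then any replacement set `R` of valid configurations such that
`(S \ D) ∪ R` has full coverage of `𝓘` satisfies `|R| ≥ |D|`. -/
theorem stmt_3 {α : Type*} [DecidableEq (α → Bool)]
    (valid : (α → Bool) → Prop)
    (𝓘 : Set (Finset (α × Bool)))
    (S D R : Finset (α → Bool)) (hDS : D ⊆ S)
    (hSvalid : ∀ c ∈ S, valid c) (hRvalid : ∀ c ∈ R, valid c)
    (U : Finset (Finset (α × Bool)))
    (hUI : ∀ I ∈ U, I ∈ 𝓘)
    (hUexcl : ∀ I ∈ U, ∀ I' ∈ U, I ≠ I' →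
      ¬∃ c, valid c ∧ Covers c I ∧ Covers c I')
    (hUuncov : ∀ I ∈ U, ∀ c ∈ S \ D, ¬Covers c I)
    (f : (α → Bool) → Finset (α × Bool))
    (hfU : ∀ c ∈ D, f c ∈ U) (hfcov : ∀ c ∈ D, Covers c (f c))
    (hfinj : ∀ c ∈ D, ∀ c' ∈ D, f c = f c' → c = c')
    (hcov : ∀ I ∈ 𝓘, ∃ c ∈ (S \ D) ∪ R, Covers c I) :
    D.card ≤ R.card := by
  have key : ∀ c ∈ D, ∃ r ∈ R, Covers r (f c) := by
    intro c hc
    obtain ⟨r, hr, hcov'⟩ := hcov (f c) (hUI _ (hfU c hc))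
    rcases Finset.mem_union.1 hr with h | h
    · exact absurd hcov' (hUuncov _ (hfU c hc) r h)
    · exact ⟨r, h, hcov'⟩
  choose g hgR hgcov using key
  classical
  have hinj : Set.InjOn (fun c : {x // x ∈ D} => g c.1 c.2) Set.univ := by
    rintro ⟨c, hc⟩ - ⟨c', hc'⟩ - h
    simp only at h
    have hfeq : f c = f c' := by
      by_contra hne
      exact hUexcl _ (hfU c hc) _ (hfU c' hc') hne
        ⟨g c hc, hRvalid _ (hgR c hc), hgcov c hc, h ▸ hgcov c' hc'⟩
    exact Subtype.ext (hfinj c hc c' hc' hfeq)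
  calc D.card = D.attach.card := (Finset.card_attach).symm
    _ ≤ R.card := Finset.card_le_card_of_injOn (fun c => g c.1 c.2)
        (fun c _ => hgR c.1 c.2) (fun a ha b hb h => hinj trivial trivial h)
end

section
/- Failed literal elimination is sampling-safe: if ℓ is a literal with the property that every satisfying assignment of φ sets ℓ to false, and ψ is obtained from φ by fixing ℓ to false (removing satisfied clauses and deleting ℓ from the remaining clauses), then samples with pairwise coverage of φ correspond bijectively (preserving cardinality) to samples with pairwise coverage of ψ, provided at least two concrete features remain. -/
/-- A sample with pairwise coverage for a formula with satisfying assignments `sat`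
and concrete features `conc`: every member satisfies the formula, and every feasible
pair of concrete literals over distinct features is jointly satisfied by some member. -/
def PairSample {β : Type*} (sat : (β → Bool) → Prop) (conc : Set β)
    (S : Finset (β → Bool)) : Prop :=
  (∀ c ∈ S, sat c) ∧
  ∀ (v w : β) (bv bw : Bool), v ∈ conc → w ∈ conc → v ≠ w →
    (∃ c, sat c ∧ c v = bv ∧ c w = bw) →
    ∃ c ∈ S, c v = bv ∧ c w = bw

/-- Failed literal elimination is sampling-safe: if the literal `(v, b)` is false in
every satisfying assignment of `φ`, and `ψ` is obtained from `φ` by fixing that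
literal to false (removing the variable `v`), then samples with pairwise coverage of
`φ` correspond bijectively (preserving cardinality) to samples with pairwise coverage
of `ψ`, provided at least two concrete features remain. -/
theorem stmt_4 {α : Type*} [DecidableEq α] (φ : (α → Bool) → Prop) (conc : Set α)
    (v : α) (b : Bool)
    (hfail : ∀ c, φ c → c v = !b)
    (ψ : ({x : α // x ≠ v} → Bool) → Prop)
    (hψ : ∀ c, ψ c ↔ φ (fun x => if h : x = v then !b else c ⟨x, h⟩))
    (hconc : ({x : {x : α // x ≠ v} | (x : α) ∈ conc}).Nontrivial) :
    ∀ k : ℕ, (∃ S, PairSample φ conc S ∧ S.card = k) ↔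
      (∃ T, PairSample ψ {x : {x : α // x ≠ v} | (x : α) ∈ conc} T ∧ T.card = k) := by
  classical
  set ext : ({x : α // x ≠ v} → Bool) → (α → Bool) :=
    fun c x => if h : x = v then !b else c ⟨x, h⟩ with hextdef
  set res : (α → Bool) → ({x : α // x ≠ v} → Bool) :=
    fun c x => c x with hresdef
  have hextval : ∀ (c : {x : α // x ≠ v} → Bool) (x : {x : α // x ≠ v}),
      ext c x = c x := by
    intro c x
    simp [ext, x.2]
  have hresext : ∀ c, res (ext c) = c := by
    intro c; funext x; simp [res, hextval]
  have hextinj : Function.Injective ext :=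
    Function.LeftInverse.injective hresext
  have hextres : ∀ c, φ c → ext (res c) = c := by
    intro c hc; funext x
    by_cases h : x = v
    · simp [ext, h, ← hfail c hc]
    · simp [ext, res, h]
  have hψ' : ∀ c, ψ c ↔ φ (ext c) := hψ
  intro k
  constructor
  · rintro ⟨S, ⟨hSmem, hScov⟩, rfl⟩
    refine ⟨S.image res, ⟨?_, ?_⟩, ?_⟩
    · intro t ht
      obtain ⟨c, hc, rfl⟩ := Finset.mem_image.mp ht
      rw [hψ', hextres c (hSmem c hc)]
      exact hSmem c hc
    · rintro ⟨x, hxv⟩ ⟨y, hyv⟩ bx byy hx hy hxy ⟨c, hc, hcx, hcy⟩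
      have hxyne : x ≠ y := fun h => hxy (by simpa using h)
      have hφext : φ (ext c) := (hψ' c).mp hc
      obtain ⟨d, hd, hdx, hdy⟩ := hScov x y bx byy hx hy hxyne
        ⟨ext c, hφext, by rw [hextval c ⟨x, hxv⟩]; exact hcx,
          by rw [hextval c ⟨y, hyv⟩]; exact hcy⟩
      exact ⟨res d, Finset.mem_image_of_mem res hd, hdx, hdy⟩
    · refine Finset.card_image_of_injOn ?_
      intro c₁ h₁ c₂ h₂ h
      have := congrArg ext h
      rwa [hextres c₁ (hSmem c₁ h₁), hextres c₂ (hSmem c₂ h₂)] at this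
  · rintro ⟨T, ⟨hTmem, hTcov⟩, rfl⟩
    refine ⟨T.image ext, ⟨?_, ?_⟩, ?_⟩
    · intro c hc
      obtain ⟨t, ht, rfl⟩ := Finset.mem_image.mp hc
      exact (hψ' t).mp (hTmem t ht)
    · intro x y bx byy hx hy hxy ⟨c, hc, hcx, hcy⟩
      have hψres : ψ (res c) := by rw [hψ', hextres c hc]; exact hc
      by_cases hxv : x = v
      · have hyv : y ≠ v := fun h => hxy (hxv.trans h.symm)
        have hbx : bx = !b := by rw [← hcx, hxv, hfail c hc]
        obtain ⟨u, hu, huy⟩ := hconc.exists_ne ⟨y, hyv⟩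
        obtain ⟨t, ht, hty, _⟩ := hTcov ⟨y, hyv⟩ u byy (res c u) hy hu
          (fun h => huy (by simp [h]))
          ⟨res c, hψres, hcy, rfl⟩
        refine ⟨ext t, Finset.mem_image_of_mem ext ht, ?_, ?_⟩
        · simp [ext, hxv, hbx]
        · rw [hextval t ⟨y, hyv⟩]; exact hty
      · by_cases hyv : y = v
        · have hby : byy = !b := by rw [← hcy, hyv, hfail c hc]
          obtain ⟨u, hu, hux⟩ := hconc.exists_ne ⟨x, hxv⟩
          obtain ⟨t, ht, htx, _⟩ := hTcov ⟨x, hxv⟩ u bx (res c u) hx hu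
            (fun h => hux (by simp [h]))
            ⟨res c, hψres, hcx, rfl⟩
          refine ⟨ext t, Finset.mem_image_of_mem ext ht, ?_, ?_⟩
          · rw [hextval t ⟨x, hxv⟩]; exact htx
          · simp [ext, hyv, hby]
        · obtain ⟨t, ht, htx, hty⟩ := hTcov ⟨x, hxv⟩ ⟨y, hyv⟩ bx byy hx hy
            (fun h => hxy (congrArg Subtype.val h))
            ⟨res c, hψres, hcx, hcy⟩
          refine ⟨ext t, Finset.mem_image_of_mem ext ht, ?_, ?_⟩
          · rw [hextval t ⟨x, hxv⟩]; exact htx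
          · rw [hextval t ⟨y, hyv⟩]; exact hty
    · exact Finset.card_image_of_injective T hextinj
end

section
/- Equivalent literal elimination is sampling-safe: if literals ℓ1 and ℓ2 take the same truth value in every satisfying assignment of φ, and ψ is obtained from φ by replacing ℓ2 with ℓ1 throughout (marking the merged variable concrete if either original was), then minimum samples with pairwise coverage of φ and ψ have the same size, provided at least two concrete features remain. -/
private def ext2 {α : Type*} [DecidableEq α] (v₁ v₂ : α) (hv : v₁ ≠ v₂) (b₁ b₂ : Bool)
    (d : {x : α // x ≠ v₂} → Bool) (x : α) : Bool :=
  if h : x = v₂ then (if d ⟨v₁, hv⟩ = b₁ then b₂ else !b₂) else d ⟨x, h⟩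

private lemma boolA (x y b₁ b₂ bv : Bool) (h : (x = b₁) ↔ (y = b₂)) :
    (y = if bv = b₁ then b₂ else !b₂) ↔ x = bv := by
  cases x <;> cases y <;> cases b₁ <;> cases b₂ <;> cases bv <;> simp_all

private lemma boolC (x y b₁ b₂ : Bool) (h : (x = b₁) ↔ (y = b₂)) :
    (if x = b₁ then b₂ else !b₂) = y := by
  cases x <;> cases y <;> cases b₁ <;> cases b₂ <;> simp_all

private lemma boolB (x ba b₁ b₂ : Bool) :
    ((if x = b₁ then b₂ else !b₂) = ba) ↔ x = (if ba = b₂ then b₁ else !b₁) := by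
  cases x <;> cases ba <;> cases b₁ <;> cases b₂ <;> decide

/-- Equivalent literal elimination is sampling-safe: if the literals `(v₁, b₁)` and
`(v₂, b₂)` take the same truth value in every satisfying assignment of `φ`, and `ψ`
is obtained from `φ` by replacing the second literal by the first (removing variable
`v₂`, and marking the merged variable `v₁` concrete if either original was), then
minimum samples with pairwise coverage of `φ` and `ψ` have the same size, provided at
least two concrete features remain. -/
theorem stmt_5 {α : Type*} [DecidableEq α] (φ : (α → Bool) → Prop) (conc : Set α)
    (v₁ v₂ : α) (b₁ b₂ : Bool) (hv : v₁ ≠ v₂)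
    (hequiv : ∀ c, φ c → (c v₁ = b₁ ↔ c v₂ = b₂))
    (ψ : ({x : α // x ≠ v₂} → Bool) → Prop)
    (hψ : ∀ c, ψ c ↔ φ (fun x => if h : x = v₂ then
      (if c ⟨v₁, hv⟩ = b₁ then b₂ else !b₂) else c ⟨x, h⟩))
    (hconc : ({x : {x : α // x ≠ v₂} |
      (x : α) ∈ conc ∨ ((x : α) = v₁ ∧ v₂ ∈ conc)}).Nontrivial) :
    ∀ k : ℕ, (∃ S, PairSample φ conc S ∧ S.card ≤ k) ↔
      (∃ T, PairSample ψ
        {x : {x : α // x ≠ v₂} | (x : α) ∈ conc ∨ ((x : α) = v₁ ∧ v₂ ∈ conc)} T ∧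
        T.card ≤ k) := by
  classical
  have hψ' : ∀ d, ψ d ↔ φ (ext2 v₁ v₂ hv b₁ b₂ d) := fun d => hψ d
  have hr : ∀ c, φ c → ext2 v₁ v₂ hv b₁ b₂ (fun x => c x.1) = c := by
    intro c hc
    funext x
    by_cases h : x = v₂
    · subst h
      simp only [ext2, dif_pos rfl]
      exact boolC _ _ _ _ (hequiv c hc)
    · simp [ext2, h]
  intro k
  constructor
  · rintro ⟨S, ⟨hSsat, hScov⟩, hScard⟩
    refine ⟨S.image (fun c x => c x.1), ⟨?_, ?_⟩,
      le_trans Finset.card_image_le hScard⟩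
    · rintro t ht
      rcases Finset.mem_image.mp ht with ⟨c, hc, rfl⟩
      rw [hψ', hr c (hSsat c hc)]
      exact hSsat c hc
    · rintro v w bv bw hvC hwC hvw ⟨d, hd, hdv, hdw⟩
      have key : ∀ (v : {x : α // x ≠ v₂}),
          ((v : α) ∈ conc ∨ ((v : α) = v₁ ∧ v₂ ∈ conc)) → ∀ bv : Bool,
          ∃ a ba, a ∈ conc ∧ (a = (v : α) ∨ (a = v₂ ∧ (v : α) = v₁)) ∧
            ∀ c, φ c → (c a = ba ↔ c (v : α) = bv) := by
        rintro v (hva | ⟨hva, hv2⟩) bv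
        · exact ⟨v, bv, hva, Or.inl rfl, fun c _ => Iff.rfl⟩
        · refine ⟨v₂, if bv = b₁ then b₂ else !b₂, hv2, Or.inr ⟨rfl, hva⟩,
            fun c hc => ?_⟩
          rw [hva]
          exact boolA _ _ _ _ _ (hequiv c hc)
      obtain ⟨a, ba, haC, haeq, hiff_a⟩ := key v hvC bv
      obtain ⟨a', ba', haC', haeq', hiff_a'⟩ := key w hwC bw
      have haa : a ≠ a' := by
        rcases haeq with h1 | ⟨h1, h1'⟩ <;> rcases haeq' with h2 | ⟨h2, h2'⟩
        · intro h; exact hvw (Subtype.ext (h1 ▸ h2 ▸ h))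
        · intro h; exact v.2 (h1.symm ▸ h2 ▸ h)
        · intro h; exact w.2 (h2.symm ▸ h1 ▸ h.symm)
        · intro h; exact hvw (Subtype.ext (h1'.trans h2'.symm))
      have hφd : φ (ext2 v₁ v₂ hv b₁ b₂ d) := (hψ' d).mp hd
      have hed : ∀ (u : {x : α // x ≠ v₂}),
          ext2 v₁ v₂ hv b₁ b₂ d (u : α) = d u := fun u => dif_neg u.2
      obtain ⟨c, hcS, hc1, hc2⟩ := hScov a a' ba ba' haC haC' haa
        ⟨ext2 v₁ v₂ hv b₁ b₂ d, hφd,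
          (hiff_a _ hφd).mpr ((hed v).trans hdv),
          (hiff_a' _ hφd).mpr ((hed w).trans hdw)⟩
      exact ⟨fun x => c x.1, Finset.mem_image_of_mem _ hcS,
        (hiff_a c (hSsat c hcS)).mp hc1, (hiff_a' c (hSsat c hcS)).mp hc2⟩
  · rintro ⟨T, ⟨hTsat, hTcov⟩, hTcard⟩
    refine ⟨T.image (ext2 v₁ v₂ hv b₁ b₂), ⟨?_, ?_⟩,
      le_trans Finset.card_image_le hTcard⟩
    · rintro c hc
      rcases Finset.mem_image.mp hc with ⟨d, hd, rfl⟩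
      exact (hψ' d).mp (hTsat d hd)
    · rintro v w bv bw hvC hwC hvw ⟨c0, hc0, hcv, hcw⟩
      have key2 : ∀ (a : α), a ∈ conc → ∀ ba : Bool,
          ∃ (u : {x : α // x ≠ v₂}) (bu : Bool),
            ((u : α) ∈ conc ∨ ((u : α) = v₁ ∧ v₂ ∈ conc)) ∧
            ((u : α) = a ∨ (a = v₂ ∧ (u : α) = v₁)) ∧
            ∀ d, ext2 v₁ v₂ hv b₁ b₂ d a = ba ↔ d u = bu := by
        intro a haC ba
        by_cases h : a = v₂
        · subst h
          refine ⟨⟨v₁, hv⟩, if ba = b₂ then b₁ else !b₁, Or.inr ⟨rfl, haC⟩,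
            Or.inr ⟨rfl, rfl⟩, fun d => ?_⟩
          simp only [ext2, dif_pos rfl]
          exact boolB _ _ _ _
        · exact ⟨⟨a, h⟩, ba, Or.inl haC, Or.inl rfl, fun d => by simp [ext2, h]⟩
      obtain ⟨u, bu, huC, hueq, hiff_u⟩ := key2 v hvC bv
      obtain ⟨u', bu', huC', hueq', hiff_u'⟩ := key2 w hwC bw
      have hψc0 : ψ (fun x => c0 x.1) := by
        rw [hψ', hr c0 hc0]; exact hc0
      have hdu : c0 (u : α) = bu := by
        have := (hiff_u (fun x => c0 x.1)).mp (by rw [hr c0 hc0]; exact hcv)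
        exact this
      have hdu' : c0 (u' : α) = bu' := by
        have := (hiff_u' (fun x => c0 x.1)).mp (by rw [hr c0 hc0]; exact hcw)
        exact this
      by_cases huu : u = u'
      · have hbu : bu = bu' := by rw [← hdu, huu, hdu']
        obtain ⟨z, hzC, z', hz'C, hzz⟩ := hconc
        obtain ⟨y, hyC, hyu⟩ : ∃ y : {x : α // x ≠ v₂}, ((y : α) ∈ conc ∨ ((y : α) = v₁ ∧ v₂ ∈ conc))
            ∧ y ≠ u := by
          by_cases h : z = u
          · exact ⟨z', hz'C, fun hh => hzz (h.trans hh.symm)⟩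
          · exact ⟨z, hzC, h⟩
        obtain ⟨d, hdT, hd1, _⟩ := hTcov u y bu (c0 (y : α)) huC hyC
          (Ne.symm hyu) ⟨fun x => c0 x.1, hψc0, hdu, rfl⟩
        refine ⟨ext2 v₁ v₂ hv b₁ b₂ d, Finset.mem_image_of_mem _ hdT,
          (hiff_u d).mpr hd1, (hiff_u' d).mpr ?_⟩
        rw [← huu, hd1]; exact hbu
      · obtain ⟨d, hdT, hd1, hd2⟩ := hTcov u u' bu bu' huC huC' huu
          ⟨fun x => c0 x.1, hψc0, hdu, hdu'⟩
        exact ⟨ext2 v₁ v₂ hv b₁ b₂ d, Finset.mem_image_of_mem _ hdT,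
          (hiff_u d).mpr hd1, (hiff_u' d).mpr hd2⟩
end

section
/- In the BVE correctness argument: let ψ be the result of eliminating variable y from CNF φ by resolution, and let A be a satisfying assignment of ψ (over the variables of φ minus y). If the extension A ∪ {y} does not satisfy φ, then the extension A ∪ {¬y} satisfies φ. -/
def SatCNF {α : Type*} (φ : Set (Finset (α × Bool))) (c : α → Bool) : Prop :=
  ∀ γ ∈ φ, ∃ l ∈ γ, c l.1 = l.2

lemma var_y {α : Type*} (y : α) (l : α × Bool) (h : l.1 = y) :
    l = (y, true) ∨ l = (y, false) := by
  obtain ⟨a, b⟩ := l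
  subst h
  cases b <;> simp

/-- Key step of the BVE correctness argument: let `ψ` be the result of eliminating
variable `y` from the CNF `φ` by resolution (adding all non-tautological resolvents
on `y` and deleting all clauses mentioning `y`), and let `A` be a satisfying
assignment of `ψ`. If extending `A` by `y := true` does not satisfy `φ`, then
extending `A` by `y := false` satisfies `φ`. -/
theorem stmt_7 {α : Type*} [DecidableEq α]
    (φ ψ : Set (Finset (α × Bool))) (y : α)
    (hψ : ∀ γ, γ ∈ ψ ↔
      ((γ ∈ φ ∧ (y, true) ∉ γ ∧ (y, false) ∉ γ) ∨
       (∃ A ∈ φ, ∃ B ∈ φ, (y, true) ∈ A ∧ (y, false) ∈ B ∧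
         γ = A.erase (y, true) ∪ B.erase (y, false) ∧
         ¬∃ l ∈ γ, (l.1, !l.2) ∈ γ)))
    (A : α → Bool) (hA : SatCNF ψ A)
    (h : ¬ SatCNF φ (Function.update A y true)) :
    SatCNF φ (Function.update A y false) := by
  unfold SatCNF at h
  push_neg at h
  obtain ⟨C, hCφ, hC⟩ := h
  -- (y, true) ∉ C
  have hCt : (y, true) ∉ C := fun hm => hC _ hm (by simp)
  -- every literal of C other than (y,false) is falsified by A
  have hCA : ∀ l ∈ C, l ≠ (y, false) → A l.1 = !l.2 := by
    intro l hl hne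
    have hly : l.1 ≠ y := by
      intro hy
      rcases var_y y l hy with h1 | h1
      · exact hCt (h1 ▸ hl)
      · exact hne h1
    have := hC l hl
    rw [Function.update_of_ne hly] at this
    cases hb : l.2 <;> cases ha : A l.1 <;> simp_all
  -- (y, false) ∈ C
  have hCf : (y, false) ∈ C := by
    by_contra hCf
    have hCψ : C ∈ ψ := (hψ C).mpr (Or.inl ⟨hCφ, hCt, hCf⟩)
    obtain ⟨l, hl, hsat⟩ := hA C hCψ
    have := hCA l hl (fun h1 => hCf (h1 ▸ hl))
    rw [hsat] at this
    simp at this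
  intro D hD
  by_cases hDf : (y, false) ∈ D
  · exact ⟨(y, false), hDf, by simp⟩
  by_cases hDt : (y, true) ∈ D
  · -- form the resolvent
    set γ := D.erase (y, true) ∪ C.erase (y, false) with hγ
    -- helper: a literal of γ not coming with var y
    have hvar : ∀ l ∈ γ, l.1 ≠ y := by
      intro l hl hy
      rcases var_y y l hy with h1 | h1 <;> subst h1 <;>
        simp only [hγ, Finset.mem_union, Finset.mem_erase] at hl
      · rcases hl with ⟨h2, _⟩ | ⟨_, h2⟩
        · exact h2 rfl
        · exact hCt h2
      · rcases hl with ⟨_, h2⟩ | ⟨h2, _⟩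
        · exact hDf h2
        · exact h2 rfl
    by_cases htaut : ∃ l ∈ γ, (l.1, !l.2) ∈ γ
    · obtain ⟨l, hl, hcomp⟩ := htaut
      have hly : l.1 ≠ y := hvar l hl
      -- A satisfies l or its complement; the one in D's part wins
      have hAval : A l.1 = l.2 ∨ A l.1 = !l.2 := by cases l.2 <;> cases h2 : A l.1 <;> simp_all
      have hDside : ∀ m, m ∈ γ → A m.1 = m.2 → ∃ k ∈ D, Function.update A y false k.1 = k.2 := by
        intro m hm hsat
        have hmy : m.1 ≠ y := hvar m hm
        simp only [hγ, Finset.mem_union, Finset.mem_erase] at hm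
        rcases hm with ⟨_, hmD⟩ | ⟨hne, hmC⟩
        · exact ⟨m, hmD, by rw [Function.update_of_ne hmy]; exact hsat⟩
        · -- m ∈ C, falsified by A: contradiction
          exfalso
          have := hCA m hmC hne
          rw [hsat] at this; simp at this
      rcases hAval with hv | hv
      · exact hDside l hl hv
      · exact hDside (l.1, !l.2) hcomp (by simpa using hv)
    · have hγψ : γ ∈ ψ := (hψ γ).mpr (Or.inr ⟨D, hD, C, hCφ, hDt, hCf, rfl, htaut⟩)
      obtain ⟨l, hl, hsat⟩ := hA γ hγψ
      have hly : l.1 ≠ y := hvar l hl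
      simp only [hγ, Finset.mem_union, Finset.mem_erase] at hl
      rcases hl with ⟨_, hlD⟩ | ⟨hne, hlC⟩
      · exact ⟨l, hlD, by rw [Function.update_of_ne hly]; exact hsat⟩
      · exfalso
        have := hCA l hlC hne
        rw [hsat] at this; simp at this
  · -- D mentions no y
    have hDψ : D ∈ ψ := (hψ D).mpr (Or.inl ⟨hD, hDt, hDf⟩)
    obtain ⟨l, hl, hsat⟩ := hA D hDψ
    have hly : l.1 ≠ y := by
      intro hy
      rcases var_y y l hy with h1 | h1
      · exact hDt (h1 ▸ hl)
      · exact hDf (h1 ▸ hl)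
    exact ⟨l, hl, by rw [Function.update_of_ne hly]; exact hsat⟩
end

section
/- In the BH-hardness gadget: let C be a set of n ≥ 4 Boolean features subject only to the constraints that at most two of them are simultaneously true (clauses ¬c ∨ ¬d ∨ ¬e for all distinct c,d,e ∈ C). Then the minimum number of configurations needed to cover all C(n,2) true pairwise interactions on C is exactly C(n,2), and covering each true pairwise interaction individually also covers all mixed and false pairwise interactions on C. -/
private lemma filter_eq_pair {α : Type*} [Fintype α] [DecidableEq α]
    (c : α → Bool) (hc : (Finset.univ.filter (fun x => c x = true)).card ≤ 2)
    {v w : α} (hvw : v ≠ w) (hv : c v = true) (hw : c w = true) :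
    Finset.univ.filter (fun x => c x = true) = {v, w} := by
  have hsub : ({v, w} : Finset α) ⊆ Finset.univ.filter (fun x => c x = true) := by
    intro x hx
    simp only [Finset.mem_insert, Finset.mem_singleton] at hx
    rcases hx with rfl | rfl <;> simp [hv, hw]
  have hcard : (Finset.univ.filter (fun x => c x = true)).card ≤ ({v, w} : Finset α).card := by
    rw [Finset.card_pair hvw]; exact hc
  exact (Finset.eq_of_subset_of_card_le hsub hcard).symm

private lemma mem_of_true {α : Type*} [Fintype α] [DecidableEq α]
    (c : α → Bool) (hc : (Finset.univ.filter (fun x => c x = true)).card ≤ 2)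
    {v w : α} (hvw : v ≠ w) (hv : c v = true) (hw : c w = true)
    {u : α} (hu : u ≠ v) (hu2 : u ≠ w) : c u = false := by
  have h := filter_eq_pair c hc hvw hv hw
  cases hcu : c u with
  | false => rfl
  | true =>
    have : u ∈ Finset.univ.filter (fun x => c x = true) := by simp [hcu]
    rw [h] at this
    simp only [Finset.mem_insert, Finset.mem_singleton] at this
    tauto

/-- The BH-hardness gadget: over `n ≥ 4` Boolean features constrained only by "at most
two features simultaneously true", the minimum number of configurations needed to
cover all `C(n,2)` true pairwise interactions is exactly `C(n,2)`, and any set of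
configurations covering every true pairwise interaction also covers all mixed and
false pairwise interactions. -/
theorem stmt_13 {α : Type*} [Fintype α] [DecidableEq α]
    (hn : 4 ≤ Fintype.card α) :
    (∃ S : Finset (α → Bool),
      (∀ c ∈ S, (Finset.univ.filter (fun x => c x = true)).card ≤ 2) ∧
      (∀ v w : α, v ≠ w → ∃ c ∈ S, c v = true ∧ c w = true) ∧
      S.card = (Fintype.card α).choose 2) ∧
    (∀ S : Finset (α → Bool),
      (∀ c ∈ S, (Finset.univ.filter (fun x => c x = true)).card ≤ 2) →
      (∀ v w : α, v ≠ w → ∃ c ∈ S, c v = true ∧ c w = true) →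
      (Fintype.card α).choose 2 ≤ S.card) ∧
    (∀ S : Finset (α → Bool),
      (∀ c ∈ S, (Finset.univ.filter (fun x => c x = true)).card ≤ 2) →
      (∀ v w : α, v ≠ w → ∃ c ∈ S, c v = true ∧ c w = true) →
      ∀ v w : α, v ≠ w → ∀ bv bw : Bool, ∃ c ∈ S, c v = bv ∧ c w = bw) := by
  refine ⟨?_, ?_, ?_⟩
  · -- existence
    refine ⟨(Finset.univ.powersetCard 2).image (fun p x => decide (x ∈ p)), ?_, ?_, ?_⟩
    · intro c hc
      simp only [Finset.mem_image, Finset.mem_powersetCard] at hc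
      obtain ⟨p, ⟨-, hp2⟩, rfl⟩ := hc
      have : Finset.univ.filter (fun x => decide (x ∈ p) = true) = p := by
        ext x; simp
      rw [this, hp2]
    · intro v w hvw
      refine ⟨fun x => decide (x ∈ ({v, w} : Finset α)), ?_, by simp, by simp⟩
      simp only [Finset.mem_image, Finset.mem_powersetCard]
      exact ⟨{v, w}, ⟨Finset.subset_univ _, Finset.card_pair hvw⟩, rfl⟩
    · rw [Finset.card_image_of_injective _ ?_, Finset.card_powersetCard,
        Finset.card_univ]
      intro p q hpq
      ext x
      have := congrFun hpq x
      simpa using this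
  · -- lower bound
    intro S hS hcov
    have := Finset.card_le_card_of_surjOn
      (f := fun c => Finset.univ.filter (fun x => c x = true))
      (s := S) (t := Finset.univ.powersetCard 2) ?_
    · rwa [Finset.card_powersetCard, Finset.card_univ] at this
    · intro p hp
      simp only [Finset.mem_coe, Finset.mem_powersetCard] at hp
      obtain ⟨-, hp2⟩ := hp
      obtain ⟨v, w, hvw, rfl⟩ := Finset.card_eq_two.mp hp2
      obtain ⟨c, hcS, hv, hw⟩ := hcov v w hvw
      exact ⟨c, hcS, filter_eq_pair c (hS c hcS) hvw hv hw⟩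
  · -- all interactions
    intro S hS hcov v w hvw bv bw
    have hcompl : 1 < ({v, w}ᶜ : Finset α).card := by
      rw [Finset.card_compl, Finset.card_pair hvw]
      omega
    obtain ⟨u1, hu1, u2, hu2, hu12⟩ := Finset.one_lt_card.mp hcompl
    simp only [Finset.mem_compl, Finset.mem_insert, Finset.mem_singleton, not_or] at hu1 hu2
    cases bv <;> cases bw
    · -- false false
      obtain ⟨c, hcS, h1, h2⟩ := hcov u1 u2 hu12
      exact ⟨c, hcS, mem_of_true c (hS c hcS) hu12 h1 h2 (Ne.symm hu1.1) (Ne.symm hu2.1),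
        mem_of_true c (hS c hcS) hu12 h1 h2 (Ne.symm hu1.2) (Ne.symm hu2.2)⟩
    · -- v false, w true
      obtain ⟨c, hcS, h1, hw'⟩ := hcov u1 w (Ne.symm hu1.2).symm
      refine ⟨c, hcS, mem_of_true c (hS c hcS) ?_ h1 hw' (Ne.symm hu1.1) hvw, hw'⟩
      exact hu1.2
    · -- v true, w false
      obtain ⟨c, hcS, hv', h1⟩ := hcov v u1 (Ne.symm hu1.1)
      exact ⟨c, hcS, hv', mem_of_true c (hS c hcS) (Ne.symm hu1.1) hv' h1 (Ne.symm hvw) (Ne.symm hu1.2)⟩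
    · obtain ⟨c, hcS, hv', hw'⟩ := hcov v w hvw
      exact ⟨c, hcS, hv', hw'⟩
end
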